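/- Let A ∈ ℂ^{m×N}, let x ∈ ℂ^N have support S, suppose the matrix A P_S* is injective, and suppose there exists h ∈ ℂ^m with (A* h)_j = sgn(x_j) for all j ∈ S and |(A* h)_l| < 1 for all l ∈ S^c. Then x is the unique minimizer of ‖z‖₁ over all z ∈ ℂ^N with A z = A x. -/

import Mathlib

open scoped ENNReal
open Matrix MeasureTheory ProbabilityTheory

/-- The operator norm of a matrix viewed as a map `(ℂ^β, ℓᵖ) → (ℂ^α, ℓᵖ)`. -/
noncomputable def opNorm (p : ℝ≥0∞) [Fact (1 ≤ p)] {α β : Type*} [Fintype α] [Fintype β]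
    [DecidableEq β] (M : Matrix α β ℂ) : ℝ :=
  ‖LinearMap.toContinuousLinearMap
    ((WithLp.linearEquiv p ℂ (α → ℂ)).symm.toLinearMap ∘ₗ
     Matrix.toLin' M ∘ₗ (WithLp.linearEquiv p ℂ (β → ℂ)).toLinearMap)‖

/-- The Euclidean (ℓ²) norm of a finitely-indexed complex vector. -/
noncomputable def l2norm {α : Type*} [Fintype α] (v : α → ℂ) : ℝ :=
  Real.sqrt (∑ i, ‖v i‖ ^ 2)

/-- Complex sign: `w/|w|` for `w ≠ 0`, and `0` for `w = 0`. -/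
noncomputable def csgn (w : ℂ) : ℂ := if w = 0 then 0 else w / ‖w‖
lemma conj_csgn_mul_self (w : ℂ) : (starRingEnd ℂ) (csgn w) * w = (‖w‖ : ℂ) := by
  unfold csgn
  by_cases h : w = 0
  · simp [h]
  · have hw : ((‖w‖ : ℝ) : ℂ) ≠ 0 := by exact_mod_cast norm_ne_zero_iff.mpr h
    rw [if_neg h, map_div₀, Complex.conj_ofReal, div_mul_eq_mul_div,
      mul_comm, Complex.mul_conj, Complex.normSq_eq_norm_sq]
    push_cast; field_simp

lemma abs_csgn (w : ℂ) (h : w ≠ 0) : ‖csgn w‖ = 1 := by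
  unfold csgn
  rw [if_neg h]
  simp [norm_div, h]

/-- Dual-certificate exact recovery (Foucart–Rauhut, Thm 4.26 (ii)):
injectivity of A restricted to the support together with a dual certificate
implies x is the unique ℓ¹-minimizer subject to Az = Ax. -/
theorem dual_certificate_unique_min (m N : ℕ) (A : Matrix (Fin m) (Fin N) ℂ)
    (x : Fin N → ℂ)
    (hinj : Function.Injective fun z : {j // x j ≠ 0} → ℂ =>
      A.mulVec fun j => if h : x j ≠ 0 then z ⟨j, h⟩ else 0)
    (hcert : ∃ h : Fin m → ℂ,
      (∀ j, x j ≠ 0 → Aᴴ.mulVec h j = csgn (x j)) ∧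
      (∀ l, x l = 0 → ‖Aᴴ.mulVec h l‖ < 1)) :
    ∀ z : Fin N → ℂ, A.mulVec z = A.mulVec x → z ≠ x →
      ∑ i, ‖x i‖ < ∑ i, ‖z i‖ := by
  obtain ⟨h, hS, hSc⟩ := hcert
  intro z hAz hzx
  set v : Fin N → ℂ := z - x with hv
  have hAv : A.mulVec v = 0 := by
    rw [hv, Matrix.mulVec_sub, hAz, sub_self]
  set η : Fin N → ℂ := Aᴴ.mulVec h with hη
  -- orthogonality
  have S0 : ∑ j, (starRingEnd ℂ) (η j) * v j = 0 := by
    have e1 : ∑ j, (starRingEnd ℂ) (η j) * v j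
        = ∑ i, (starRingEnd ℂ) (h i) * (A.mulVec v i) := by
      simp only [hη, Matrix.mulVec, dotProduct, Matrix.conjTranspose_apply,
        map_sum, Finset.sum_mul, Finset.mul_sum]
      rw [Finset.sum_comm]
      apply Finset.sum_congr rfl; intro i _
      apply Finset.sum_congr rfl; intro j _
      simp only [_root_.map_mul, RCLike.star_def, Complex.conj_conj]
      ring
    rw [e1, hAv]
    simp
  -- there is l with x l = 0, v l ≠ 0
  have hex : ∃ l, x l = 0 ∧ v l ≠ 0 := by
    by_contra hc
    push_neg at hc
    apply hzx
    have hw : (fun j => if hj : x j ≠ 0 then (fun j : {j // x j ≠ 0} => v j.1) ⟨j, hj⟩ else 0) = v := by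
      funext j
      by_cases hj : x j ≠ 0
      · rw [dif_pos hj]
      · push_neg at hj
        rw [dif_neg (not_not_intro hj)]
        exact (hc j hj).symm
    have h0 : (fun j : {j // x j ≠ 0} => v j.1) = 0 := by
      apply hinj
      show (A.mulVec fun j => if hj : x j ≠ 0 then _ else 0) = _
      rw [hw, hAv]
      have e2 : (fun j => if hj : x j ≠ 0 then (0 : {j // x j ≠ 0} → ℂ) ⟨j, hj⟩ else 0)
          = (0 : Fin N → ℂ) := by
        funext j; by_cases hj : x j ≠ 0 <;> simp [hj]
      show (0 : Fin m → ℂ) = A.mulVec fun j => if hj : x j ≠ 0 then (0 : {j // x j ≠ 0} → ℂ) ⟨j, hj⟩ else 0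
      rw [e2, Matrix.mulVec_zero]
    have hvz : v = 0 := by
      funext j
      by_cases hj : x j ≠ 0
      · exact congrFun h0 ⟨j, hj⟩
      · push_neg at hj; exact hc j hj
    rwa [hv, sub_eq_zero] at hvz
  obtain ⟨l, hl0, hvl⟩ := hex
  -- pointwise inequality
  have key : ∀ j, ((starRingEnd ℂ) (η j) * v j).re
      + (if x j = 0 then (1 - ‖η j‖) * ‖v j‖ else 0)
      ≤ ‖z j‖ - ‖x j‖ := by
    intro j
    by_cases hj : x j = 0
    · rw [if_pos hj]
      have hzj : z j = v j := by simp [hv, hj]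
      have h1 : ((starRingEnd ℂ) (η j) * v j).re ≤ ‖η j‖ * ‖v j‖ := by
        calc ((starRingEnd ℂ) (η j) * v j).re ≤ ‖(starRingEnd ℂ) (η j) * v j‖ :=
              Complex.re_le_norm _
          _ = ‖η j‖ * ‖v j‖ := by
              rw [norm_mul, Complex.norm_conj]
      rw [hzj, hj]
      simp only [norm_zero, sub_zero]
      nlinarith
    · rw [if_neg hj]
      have hηj : η j = csgn (x j) := hS j hj
      have h1 : ((starRingEnd ℂ) (η j) * z j).re ≤ ‖z j‖ := by
        calc ((starRingEnd ℂ) (η j) * z j).re ≤ ‖(starRingEnd ℂ) (η j) * z j‖ :=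
              Complex.re_le_norm _
          _ = ‖z j‖ := by
              rw [norm_mul, Complex.norm_conj, hηj, abs_csgn _ hj, one_mul]
      have h2 : ((starRingEnd ℂ) (η j) * z j).re
          = ‖x j‖ + ((starRingEnd ℂ) (η j) * v j).re := by
        have e3 : (starRingEnd ℂ) (η j) * z j
            = (‖x j‖ : ℂ) + (starRingEnd ℂ) (η j) * v j := by
          have hz : z j = x j + v j := by simp [hv]
          rw [hz, mul_add, hηj, conj_csgn_mul_self]
        rw [e3]; simp
      rw [h2] at h1
      linarith
  -- sum it up
  have hsum : ∑ j, (((starRingEnd ℂ) (η j) * v j).re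
      + (if x j = 0 then (1 - ‖η j‖) * ‖v j‖ else 0))
      ≤ ∑ j, (‖z j‖ - ‖x j‖) :=
    Finset.sum_le_sum fun j _ => key j
  rw [Finset.sum_add_distrib] at hsum
  have hre : ∑ j, ((starRingEnd ℂ) (η j) * v j).re = 0 := by
    rw [← Complex.re_sum, S0, Complex.zero_re]
  have hpos : 0 < ∑ j, (if x j = 0 then (1 - ‖η j‖) * ‖v j‖ else 0) := by
    refine Finset.sum_pos' (fun j _ => ?_) ⟨l, Finset.mem_univ l, ?_⟩
    · by_cases hj : x j = 0
      · rw [if_pos hj]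
        have := hSc j hj
        have := norm_nonneg (v j)
        nlinarith
      · rw [if_neg hj]
    · rw [if_pos hl0]
      have h1 := hSc l hl0
      have h2 : 0 < ‖v l‖ := norm_pos_iff.mpr hvl
      nlinarith
  rw [hre, zero_add] at hsum
  have hfin : 0 < ∑ j, (‖z j‖ - ‖x j‖) := lt_of_lt_of_le hpos hsum
  rw [Finset.sum_sub_distrib] at hfin
  linarith
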